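/- Fix a real γ with 1 < γ < 2 and for each integer N ≥ 2 let x_N = [ (γ−1)·H_{N−1,γ}/N + (N−1)^{1−γ} ]^{1/(1−γ)}, which is the unique positive real solving (N/((1−γ)·H_{N−1,γ}))·[(N−1)^{1−γ} − x^{1−γ}] = 1. Then lim_{N→∞} x_N / N = 1; in particular the expected maximum degree grows linearly with N. -/

import Mathlib

open Filter

/-- The generalized harmonic number `H_{a,b} = ∑_{t=1}^{a} t^{-b}`. -/
noncomputable def Hgen (a : ℕ) (b : ℝ) : ℝ := ∑ t ∈ Finset.Icc 1 a, (t : ℝ) ^ (-b)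

/-- The continuum approximation to the expected maximum degree:
`x_N = [(γ-1)·H_{N-1,γ}/N + (N-1)^{1-γ}]^{1/(1-γ)}`. -/
noncomputable def xN (γ : ℝ) (N : ℕ) : ℝ :=
  ((γ - 1) * Hgen (N - 1) γ / N + ((N : ℝ) - 1) ^ (1 - γ)) ^ (1 / (1 - γ))

/-!
Solving for `x` is elementary: the equation is affine in `x ^ (1 - γ)`, and `x ↦ x ^ (1 - γ)`
is a bijection of the positive reals. For the limit, divide the base of `x_N` by `N ^ (1 - γ)`:
`x_N / N = ((γ - 1) H_{N-1,γ} / N ^ (2 - γ) + ((N - 1) / N) ^ (1 - γ)) ^ (1 / (1 - γ))`.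
Since `γ > 1` the harmonic numbers converge (to `ζ(γ)`), and since `γ < 2` the first summand
tends to `0`, so the base tends to `1`.
-/

open Topology

lemma Hgen_pos {a : ℕ} (ha : 1 ≤ a) (b : ℝ) : 0 < Hgen a b :=
  Finset.sum_pos (fun t ht => Real.rpow_pos_of_pos (by simp at ht; exact_mod_cast ht.1) _)
    ⟨1, by simp [ha]⟩

lemma Hgen_eq_sum_range {b : ℝ} (hb : b ≠ 0) (a : ℕ) :
    Hgen a b = ∑ t ∈ Finset.range (a + 1), (t : ℝ) ^ (-b) := by
  rw [Finset.range_eq_Ico, Finset.sum_eq_sum_Ico_succ_bot (Nat.succ_pos a), Nat.cast_zero,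
    Real.zero_rpow (neg_ne_zero.2 hb), zero_add]
  rfl

lemma tendsto_Hgen {b : ℝ} (hb : 1 < b) :
    Tendsto (fun a => Hgen a b) atTop (𝓝 (∑' t : ℕ, (t : ℝ) ^ (-b))) := by
  have hsum : Summable (fun t : ℕ => (t : ℝ) ^ (-b)) := Real.summable_nat_rpow.2 (by linarith)
  simpa only [Hgen_eq_sum_range (by linarith : b ≠ 0), Function.comp_def] using
    hsum.hasSum.tendsto_sum_nat.comp (tendsto_add_atTop_nat 1)

lemma tendsto_Hgen_div_rpow {b s : ℝ} (hb : 1 < b) (hs : 0 < s) :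
    Tendsto (fun N : ℕ => Hgen (N - 1) b / (N : ℝ) ^ s) atTop (𝓝 0) :=
  ((tendsto_Hgen hb).comp (tendsto_sub_atTop_nat 1)).div_atTop
    ((tendsto_rpow_atTop hs).comp tendsto_natCast_atTop_atTop)

lemma tendsto_sub_one_div_self_rpow (s : ℝ) :
    Tendsto (fun N : ℕ => (((N : ℝ) - 1) / N) ^ s) atTop (𝓝 1) := by
  have h : Tendsto (fun N : ℕ => 1 - 1 / (N : ℝ)) atTop (𝓝 1) := by
    simpa using (tendsto_const_nhds (x := (1 : ℝ))).sub tendsto_one_div_atTop_nhds_zero_nat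
  have h' : Tendsto (fun N : ℕ => ((N : ℝ) - 1) / N) atTop (𝓝 1) := by
    refine h.congr' ((eventually_ge_atTop 1).mono fun N hN => ?_)
    have : (N : ℝ) ≠ 0 := by positivity
    field_simp
  simpa [Function.comp_def] using (Real.continuousAt_rpow_const 1 s (Or.inl one_ne_zero)).tendsto.comp h'

lemma div_mul_sub_eq_one_iff {a c p y : ℝ} (ha : a ≠ 0) (hc : c ≠ 0) :
    a / c * (p - y) = 1 ↔ y = p - c / a := by
  rw [div_mul_eq_mul_div, div_eq_one_iff_eq hc, eq_sub_iff_add_eq, ← eq_sub_iff_add_eq',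
    div_eq_iff ha, mul_comm (p - y), eq_comm (a := c)]

noncomputable def xNBase (γ : ℝ) (N : ℕ) : ℝ :=
  (γ - 1) * Hgen (N - 1) γ / N + ((N : ℝ) - 1) ^ (1 - γ)

lemma xN_eq_xNBase_rpow (γ : ℝ) (N : ℕ) : xN γ N = xNBase γ N ^ (1 / (1 - γ)) := rfl

lemma xNBase_pos {γ : ℝ} (hγ : 1 ≤ γ) {N : ℕ} (hN : 2 ≤ N) : 0 < xNBase γ N := by
  have hN' : (2 : ℝ) ≤ N := by exact_mod_cast hN
  have hH : 0 ≤ (γ - 1) * Hgen (N - 1) γ / N :=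
    div_nonneg (mul_nonneg (by linarith) (Hgen_pos (by omega) γ).le) (by linarith)
  have hpow : 0 < ((N : ℝ) - 1) ^ (1 - γ) := Real.rpow_pos_of_pos (by linarith) _
  exact add_pos_of_nonneg_of_pos hH hpow

lemma eq_xN_iff {γ : ℝ} (hγ : 1 < γ) {N : ℕ} (hN : 2 ≤ N) {x : ℝ} (hx : 0 < x) :
    (N : ℝ) / ((1 - γ) * Hgen (N - 1) γ) * (((N : ℝ) - 1) ^ (1 - γ) - x ^ (1 - γ)) = 1
      ↔ x = xN γ N := by
  have hne : 1 - γ ≠ 0 := by linarith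
  have hN0 : (N : ℝ) ≠ 0 := by positivity
  rw [xN_eq_xNBase_rpow, one_div, Real.eq_rpow_inv hx.le (xNBase_pos hγ.le hN).le hne,
    div_mul_sub_eq_one_iff hN0 (mul_ne_zero hne (Hgen_pos (by omega) γ).ne'), xNBase]
  constructor <;> intro h <;> rw [h] <;> ring

lemma xN_div_self {γ : ℝ} (hγ : 1 < γ) {N : ℕ} (hN : 2 ≤ N) :
    xN γ N / N = ((γ - 1) * (Hgen (N - 1) γ / (N : ℝ) ^ (2 - γ))
      + (((N : ℝ) - 1) / N) ^ (1 - γ)) ^ (1 / (1 - γ)) := by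
  have hn : (0 : ℝ) < N := by positivity
  have hN' : (2 : ℝ) ≤ N := by exact_mod_cast hN
  have hbase : (γ - 1) * (Hgen (N - 1) γ / (N : ℝ) ^ (2 - γ)) + (((N : ℝ) - 1) / N) ^ (1 - γ)
      = xNBase γ N / (N : ℝ) ^ (1 - γ) := by
    rw [Real.div_rpow (by linarith) hn.le, show (2 : ℝ) - γ = 1 + (1 - γ) by ring,
      Real.rpow_add hn, Real.rpow_one, xNBase]
    field_simp
  rw [hbase, Real.div_rpow (xNBase_pos hγ.le hN).le (Real.rpow_nonneg hn.le _), one_div,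
    Real.rpow_rpow_inv hn.le (by linarith), xN_eq_xNBase_rpow, one_div]

/-- For `1 < γ < 2`, `x_N` is the unique positive real solving
`(N/((1-γ)·H_{N-1,γ}))·[(N-1)^{1-γ} - x^{1-γ}] = 1`, and `lim_{N→∞} x_N / N = 1`;
in particular the expected maximum degree grows linearly with `N`. -/
theorem max_degree_scaling_gamma_between_one_two (γ : ℝ) (h1 : 1 < γ) (h2 : γ < 2) :
    (∀ N : ℕ, 2 ≤ N → ∀ x : ℝ, 0 < x →
      ((N : ℝ) / ((1 - γ) * Hgen (N - 1) γ) * (((N : ℝ) - 1) ^ (1 - γ) - x ^ (1 - γ)) = 1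
        ↔ x = xN γ N)) ∧
    Tendsto (fun N : ℕ => xN γ N / N) atTop (nhds 1) := by
  refine ⟨fun N hN x hx => eq_xN_iff h1 hN hx, ?_⟩
  have hbase : Tendsto (fun N : ℕ => (γ - 1) * (Hgen (N - 1) γ / (N : ℝ) ^ (2 - γ))
      + (((N : ℝ) - 1) / N) ^ (1 - γ)) atTop (𝓝 1) := by
    simpa using ((tendsto_Hgen_div_rpow h1 (sub_pos.2 h2)).const_mul (γ - 1)).add
      (tendsto_sub_one_div_self_rpow (1 - γ))
  have hlim := (Real.continuousAt_rpow_const 1 (1 / (1 - γ)) (Or.inl one_ne_zero)).tendsto.comp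
    hbase
  rw [Real.one_rpow] at hlim
  exact hlim.congr' ((eventually_ge_atTop 2).mono fun N hN => (xN_div_self h1 hN).symm)
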